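/- (Four-parameter extension of Fu–Lascoux) For a positive integer n and parameters w, x, y, z, q with all denominators nonzero: (q;q)_n/(yz;q)_n · ∑_{i=1}^n [w^i y^{n-i} (x;q)_i (y;q)_i (z;q)_{n-i}] / [(wx;q)_i (q;q)_i (q;q)_{n-i}] = ∑_{i=1}^n [n choose i]_q (-1)^{i-1} q^{binom(i+1,2) - in} (1 - (w;q)_i/(wx;q)_i) · (y;q)_i/(yz;q)_i. -/

import Mathlib

noncomputable def qPoch (q a : ℝ) (n : ℕ) : ℝ := ∏ j ∈ Finset.range n, (1 - a * q ^ j)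

noncomputable def qBinom (q : ℝ) (n r : ℕ) : ℝ :=
  if r ≤ n then qPoch q q n / (qPoch q q r * qPoch q q (n - r)) else 0

/-!
Write `K_n(i) = y^(n-i) (y;q)_i (z;q)_(n-i) / ((q;q)_i (q;q)_(n-i))`. Swapping the order of
summation and evaluating the inner sum by the q-Chu–Vandermonde identity gives, for every sequence
`c`, the transform
`(q;q)_n/(yz;q)_n ∑_i (∑_j [i,j] q^(-ij) c_j) K_n(i) = ∑_j [n,j] q^(-jn) c_j (y;q)_j/(yz;q)_j`.
For `c_j = (-1)^j q^(binom(j+1,2))` the inner sums are `δ_(i,0)` by the q-binomial theorem, so the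
transform evaluates `∑_j [i,j] q^(-ij) c_j (w;q)_j/(wx;q)_j = w^i (x;q)_i/(wx;q)_i`. Hence for
`c_j = (-1)^j q^(binom(j+1,2)) ((w;q)_j/(wx;q)_j - 1)` the inner sums are `w^i (x;q)_i/(wx;q)_i`
for `i ≥ 1` and `0` for `i = 0`, and the transform of this `c` is the identity.
-/

open Finset

lemma sum_range_add_one_id (n : ℕ) : ∑ t ∈ range n, (t + 1) = n * (n + 1) / 2 := by
  have h := sum_range_id (n + 1)
  rw [sum_range_succ'] at h
  simpa [mul_comm] using h

lemma sum_Icc_one_eq_sum_range_succ {M : Type*} [AddCommMonoid M] (f : ℕ → M) (h : f 0 = 0)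
    (n : ℕ) : ∑ i ∈ Icc 1 n, f i = ∑ i ∈ range (n + 1), f i := by
  rw [range_eq_Ico, sum_eq_sum_Ico_succ_bot n.succ_pos, h, zero_add, ← Ico_add_one_right_eq_Icc]
  rfl

lemma zpow_natCast_sub_mul {G₀ : Type*} [GroupWithZero G₀] {q : G₀} (hq : q ≠ 0) (c i n : ℕ) :
    q ^ ((c : ℤ) - (i : ℤ) * n) = q ^ c * q⁻¹ ^ (i * n) := by
  rw [zpow_sub₀ hq, ← Nat.cast_mul, zpow_natCast, zpow_natCast, inv_pow, div_eq_mul_inv]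

section qPoch

variable (q : ℝ)

lemma qPoch_zero (a : ℝ) : qPoch q a 0 = 1 := prod_range_zero _

lemma qPoch_succ (a : ℝ) (n : ℕ) : qPoch q a (n + 1) = qPoch q a n * (1 - a * q ^ n) :=
  prod_range_succ _ _

lemma qPoch_add (a : ℝ) (s t : ℕ) :
    qPoch q a (s + t) = qPoch q a s * qPoch q (a * q ^ s) t := by
  simp only [qPoch, prod_range_add, pow_add, mul_assoc]

lemma qPoch_self_succ (n : ℕ) : qPoch q q (n + 1) = qPoch q q n * (1 - q ^ (n + 1)) := by
  rw [qPoch_succ, pow_succ' q n]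

variable {q}

lemma qPoch_ne_zero {a : ℝ} (ha : ∀ j : ℕ, 1 - a * q ^ j ≠ 0) (n : ℕ) : qPoch q a n ≠ 0 :=
  prod_ne_zero_iff.mpr fun j _ ↦ ha j

lemma qPoch_mul_pow_ne_zero {a : ℝ} (ha : ∀ j : ℕ, 1 - a * q ^ j ≠ 0) (s n : ℕ) :
    qPoch q (a * q ^ s) n ≠ 0 :=
  qPoch_ne_zero (fun j ↦ by simpa only [mul_assoc, ← pow_add] using ha (s + j)) n

lemma qPoch_self_ne_zero (hqpow : ∀ j : ℕ, 1 ≤ j → 1 - q ^ j ≠ 0) (n : ℕ) : qPoch q q n ≠ 0 :=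
  qPoch_ne_zero (fun j ↦ by simpa only [pow_succ'] using hqpow (j + 1) j.succ_pos) n

lemma qBinom_eq_div {n r : ℕ} (h : r ≤ n) :
    qBinom q n r = qPoch q q n / (qPoch q q r * qPoch q q (n - r)) := if_pos h

end qPoch

/-- For `Y ≠ 0` this is `Y^s (z/Y;q)_s`; at `Y = 0` it is `(-z)^s q^(binom(s,2))`. -/
noncomputable def qPochHom (q Y z : ℝ) (s : ℕ) : ℝ := ∏ j ∈ range s, (Y - z * q ^ j)

lemma qPochHom_succ (q Y z : ℝ) (s : ℕ) :
    qPochHom q Y z (s + 1) = qPochHom q Y z s * (Y - z * q ^ s) := prod_range_succ _ _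

lemma qPochHom_mul_left (q Y z : ℝ) (s : ℕ) : qPochHom q Y (Y * z) s = Y ^ s * qPoch q z s := by
  have hY : Y ^ s = ∏ _j ∈ range s, Y := by simp
  rw [qPochHom, qPoch, hY, ← prod_mul_distrib]
  simp only [mul_sub, mul_one, mul_assoc]

lemma qPochHom_zero_left_inv_pow {q : ℝ} (hq : q ≠ 0) (k j : ℕ) :
    qPochHom q 0 (q⁻¹ ^ k) j = (-1) ^ j * q ^ (j * (j + 1) / 2) * q⁻¹ ^ (j * (k + 1)) := by
  have h_factor : ∀ t, 0 - q⁻¹ ^ k * q ^ t = -(q ^ (t + 1) * q⁻¹ ^ (k + 1)) := by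
    intro t
    rw [pow_succ, pow_succ, mul_mul_mul_comm, mul_inv_cancel₀ hq]
    ring
  simp only [qPochHom, h_factor, prod_neg, prod_mul_distrib, prod_pow_eq_pow_sum, card_range,
    sum_range_add_one_id, sum_const, smul_eq_mul]
  ring

/-- The q-Chu–Vandermonde identity in homogeneous form. The induction step multiplies by
`1 - q^(r+s) = (1 - q^r) + q^r (1 - q^s)` and lowers `r`, respectively `s`, by one. -/
theorem sum_antidiagonal_qPoch_mul_qPochHom {q : ℝ} (hqpow : ∀ j : ℕ, 1 ≤ j → 1 - q ^ j ≠ 0)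
    (Y z : ℝ) (m : ℕ) :
    ∑ p ∈ antidiagonal m, qPoch q Y p.1 * qPochHom q Y z p.2 / (qPoch q q p.1 * qPoch q q p.2) =
      qPoch q z m / qPoch q q m := by
  set A : ℕ × ℕ → ℝ := fun p ↦
    qPoch q Y p.1 * qPochHom q Y z p.2 / (qPoch q q p.1 * qPoch q q p.2) with hA
  have hP := qPoch_self_ne_zero hqpow
  induction m with
  | zero => simp [hA, qPoch_zero, qPochHom]
  | succ m ih =>
    have h_left : ∀ p, (1 - q ^ (p.1 + 1)) * A (p.1 + 1, p.2) = (1 - Y * q ^ p.1) * A p := by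
      intro p
      simp only [hA, qPoch_succ q Y, qPoch_self_succ]
      field_simp [hP, hqpow _ p.1.succ_pos]
    have h_right : ∀ p, q ^ p.1 * (1 - q ^ (p.2 + 1)) * A (p.1, p.2 + 1) =
        q ^ p.1 * (Y - z * q ^ p.2) * A p := by
      intro p
      simp only [hA, qPochHom_succ, qPoch_self_succ]
      field_simp [hP, hqpow _ p.2.succ_pos]
    have h_split : (1 - q ^ (m + 1)) * ∑ p ∈ antidiagonal (m + 1), A p =
        ∑ p ∈ antidiagonal (m + 1), (1 - q ^ p.1) * A p +
          ∑ p ∈ antidiagonal (m + 1), q ^ p.1 * (1 - q ^ p.2) * A p := by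
      rw [mul_sum, ← sum_add_distrib]
      refine sum_congr rfl fun p hp ↦ ?_
      rw [← mem_antidiagonal.mp hp, pow_add]
      ring
    have h_rec : (1 - q ^ (m + 1)) * ∑ p ∈ antidiagonal (m + 1), A p =
        (1 - z * q ^ m) * ∑ p ∈ antidiagonal m, A p := by
      rw [h_split, Nat.sum_antidiagonal_succ, Nat.sum_antidiagonal_succ']
      simp only [pow_zero, sub_self, zero_mul, mul_zero, zero_add, h_left, h_right]
      rw [mul_sum, ← sum_add_distrib]
      refine sum_congr rfl fun p hp ↦ ?_
      rw [← mem_antidiagonal.mp hp, pow_add]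
      ring
    have hm := hqpow _ m.succ_pos
    rw [← mul_right_inj' hm, h_rec, ih, qPoch_succ q z, qPoch_self_succ]
    field_simp [hP m]

theorem sum_range_qChuVandermonde {q : ℝ} (hqpow : ∀ j : ℕ, 1 ≤ j → 1 - q ^ j ≠ 0)
    (Y z : ℝ) (m : ℕ) :
    ∑ k ∈ range (m + 1), Y ^ (m - k) * qPoch q Y k * qPoch q z (m - k) /
        (qPoch q q k * qPoch q q (m - k)) = qPoch q (Y * z) m / qPoch q q m := by
  rw [← sum_antidiagonal_qPoch_mul_qPochHom hqpow Y (Y * z) m,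
    Nat.sum_antidiagonal_eq_sum_range_succ_mk]
  refine sum_congr rfl fun k _ ↦ ?_
  rw [qPochHom_mul_left]
  ring

/-- The q-binomial theorem `∑_j [i,j] (-1)^j q^(binom(j,2)) t^j = (t;q)_i`, which is the case
`Y = 0` of `sum_antidiagonal_qPoch_mul_qPochHom`, at `t = q^(1-i)`. -/
theorem sum_range_qBinom_mul_sign_eq_ite {q : ℝ} (hq : q ≠ 0)
    (hqpow : ∀ j : ℕ, 1 ≤ j → 1 - q ^ j ≠ 0) (i : ℕ) :
    ∑ j ∈ range (i + 1), qBinom q i j * q⁻¹ ^ (j * i) * ((-1) ^ j * q ^ (j * (j + 1) / 2)) =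
      if i = 0 then 1 else 0 := by
  cases i with
  | zero => simp [qBinom_eq_div, qPoch_zero]
  | succ k =>
    have h_vanish : qPoch q (q⁻¹ ^ k) (k + 1) = 0 :=
      prod_eq_zero (mem_range.mpr k.lt_succ_self)
        (by rw [← mul_pow, inv_mul_cancel₀ hq, one_pow, sub_self])
    have h := sum_antidiagonal_qPoch_mul_qPochHom hqpow 0 (q⁻¹ ^ k) (k + 1)
    rw [h_vanish, zero_div, ← Nat.sum_antidiagonal_swap,
      Nat.sum_antidiagonal_eq_sum_range_succ_mk] at h
    rw [if_neg k.succ_ne_zero, ← mul_zero (qPoch q q (k + 1)), ← h, mul_sum]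
    refine sum_congr rfl fun j hj ↦ ?_
    have h_one : qPoch q 0 (k + 1 - j) = 1 := by simp [qPoch]
    rw [qBinom_eq_div (mem_range_succ_iff.mp hj), Prod.fst_swap, Prod.snd_swap, h_one,
      qPochHom_zero_left_inv_pow hq]
    field_simp [qPoch_self_ne_zero hqpow]

lemma sum_range_qBinom_mul_pow_qPoch_div {q : ℝ} (hq : q ≠ 0)
    (hqpow : ∀ j : ℕ, 1 ≤ j → 1 - q ^ j ≠ 0) (y z : ℝ) (j m : ℕ) :
    ∑ k ∈ range (m + 1), qBinom q (j + k) j * q⁻¹ ^ (j * (j + k)) *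
        (y ^ (j + m - (j + k)) * qPoch q y (j + k) * qPoch q z (j + m - (j + k)) /
          (qPoch q q (j + k) * qPoch q q (j + m - (j + k)))) =
      q⁻¹ ^ (j * (j + m)) * qPoch q y j / qPoch q q j *
        (qPoch q (y * q ^ j * z) m / qPoch q q m) := by
  rw [← sum_range_qChuVandermonde hqpow, mul_sum]
  refine sum_congr rfl fun k hk ↦ ?_
  obtain ⟨d, rfl⟩ := Nat.exists_eq_add_of_le (mem_range_succ_iff.mp hk)
  rw [qBinom_eq_div (Nat.le_add_right j k), Nat.add_sub_cancel_left, ← add_assoc,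
    Nat.add_sub_cancel_left, Nat.add_sub_cancel_left, qPoch_add q y j k]
  have hPjk := qPoch_self_ne_zero hqpow (j + k)
  simp only [inv_pow]
  field_simp [qPoch_self_ne_zero hqpow]
  ring

theorem mul_sum_qBinom_transform {q : ℝ} (hq : q ≠ 0) (hqpow : ∀ j : ℕ, 1 ≤ j → 1 - q ^ j ≠ 0)
    {y z : ℝ} (hyz : ∀ j : ℕ, 1 - y * z * q ^ j ≠ 0) (c : ℕ → ℝ) (n : ℕ) :
    qPoch q q n / qPoch q (y * z) n *
        ∑ i ∈ range (n + 1), (∑ j ∈ range (i + 1), qBinom q i j * q⁻¹ ^ (j * i) * c j) *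
          (y ^ (n - i) * qPoch q y i * qPoch q z (n - i) / (qPoch q q i * qPoch q q (n - i))) =
      ∑ j ∈ range (n + 1),
        qBinom q n j * q⁻¹ ^ (j * n) * c j * (qPoch q y j / qPoch q (y * z) j) := by
  set F : ℕ → ℕ → ℝ := fun j k ↦ c j * (qBinom q (j + k) j * q⁻¹ ^ (j * (j + k)) *
    (y ^ (n - (j + k)) * qPoch q y (j + k) * qPoch q z (n - (j + k)) /
      (qPoch q q (j + k) * qPoch q q (n - (j + k))))) with hF
  have h_diag : ∀ i ∈ range (n + 1),
      (∑ j ∈ range (i + 1), qBinom q i j * q⁻¹ ^ (j * i) * c j) *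
          (y ^ (n - i) * qPoch q y i * qPoch q z (n - i) / (qPoch q q i * qPoch q q (n - i))) =
        ∑ j ∈ range (i + 1), F j (i - j) := by
    intro i _
    rw [sum_mul]
    refine sum_congr rfl fun j hj ↦ ?_
    rw [hF]
    beta_reduce
    rw [Nat.add_sub_cancel' (mem_range_succ_iff.mp hj)]
    ring
  rw [sum_congr rfl h_diag, sum_range_diag_flip, mul_sum]
  refine sum_congr rfl fun j hj ↦ ?_
  obtain ⟨m, rfl⟩ := Nat.exists_eq_add_of_le (mem_range_succ_iff.mp hj)
  rw [show j + m + 1 - j = m + 1 by omega, hF, ← mul_sum,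
    sum_range_qBinom_mul_pow_qPoch_div hq hqpow, qBinom_eq_div (Nat.le_add_right j m),
    Nat.add_sub_cancel_left, qPoch_add q (y * z) j m, mul_right_comm y z]
  have hyz_j := qPoch_ne_zero hyz j
  have hyz_shift := qPoch_mul_pow_ne_zero hyz j m
  field_simp [qPoch_self_ne_zero hqpow]

theorem sum_range_qBinom_mul_sign_mul_qPoch_div {q : ℝ} (hq : q ≠ 0)
    (hqpow : ∀ j : ℕ, 1 ≤ j → 1 - q ^ j ≠ 0) {a b : ℝ} (hab : ∀ j : ℕ, 1 - a * b * q ^ j ≠ 0)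
    (i : ℕ) :
    ∑ j ∈ range (i + 1), qBinom q i j * q⁻¹ ^ (j * i) * ((-1) ^ j * q ^ (j * (j + 1) / 2)) *
        (qPoch q a j / qPoch q (a * b) j) = a ^ i * qPoch q b i / qPoch q (a * b) i := by
  rw [← mul_sum_qBinom_transform hq hqpow hab, sum_congr rfl fun k _ ↦ by
    rw [sum_range_qBinom_mul_sign_eq_ite hq hqpow]]
  simp only [ite_mul, one_mul, zero_mul, sum_ite_eq', mem_range, Nat.zero_lt_succ, if_true,
    qPoch_zero, Nat.sub_zero]
  field_simp [qPoch_self_ne_zero hqpow, qPoch_ne_zero hab]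

theorem sum_range_qBinom_mul_sign_mul_qPoch_div_sub_one {q : ℝ} (hq : q ≠ 0)
    (hqpow : ∀ j : ℕ, 1 ≤ j → 1 - q ^ j ≠ 0) {a b : ℝ} (hab : ∀ j : ℕ, 1 - a * b * q ^ j ≠ 0)
    (i : ℕ) :
    ∑ j ∈ range (i + 1), qBinom q i j * q⁻¹ ^ (j * i) *
        ((-1) ^ j * q ^ (j * (j + 1) / 2) * (qPoch q a j / qPoch q (a * b) j - 1)) =
      if i = 0 then 0 else a ^ i * qPoch q b i / qPoch q (a * b) i := by
  simp only [mul_sub, mul_one, sum_sub_distrib, ← mul_assoc _ _ (_ / _)]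
  rw [sum_range_qBinom_mul_sign_mul_qPoch_div hq hqpow hab,
    sum_range_qBinom_mul_sign_eq_ite hq hqpow]
  split_ifs with hi
  · simp [hi, qPoch_zero]
  · rw [sub_zero]

theorem prop33_general (q w x y z : ℝ) (n : ℕ) (hq : q ≠ 0)
    (hden1 : ∀ j : ℕ, 1 ≤ j → 1 - q ^ j ≠ 0)
    (hden2 : ∀ j : ℕ, 0 ≤ j → 1 - w * x * q ^ j ≠ 0)
    (hden3 : ∀ j : ℕ, 0 ≤ j → 1 - y * z * q ^ j ≠ 0) :
    qPoch q q n / qPoch q (y * z) n *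
        ∑ i ∈ Finset.Icc 1 n,
          w ^ i * y ^ (n - i) * qPoch q x i * qPoch q y i * qPoch q z (n - i) /
            (qPoch q (w * x) i * qPoch q q i * qPoch q q (n - i)) =
      ∑ i ∈ Finset.Icc 1 n,
        qBinom q n i * (-1) ^ (i - 1) * q ^ (((i * (i + 1) / 2 : ℕ) : ℤ) - (i : ℤ) * n) *
          (1 - qPoch q w i / qPoch q (w * x) i) * (qPoch q y i / qPoch q (y * z) i) := by
  have hwx : ∀ j : ℕ, 1 - w * x * q ^ j ≠ 0 := fun j ↦ hden2 j j.zero_le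
  have hyz : ∀ j : ℕ, 1 - y * z * q ^ j ≠ 0 := fun j ↦ hden3 j j.zero_le
  set c : ℕ → ℝ := fun j ↦
    (-1) ^ j * q ^ (j * (j + 1) / 2) * (qPoch q w j / qPoch q (w * x) j - 1) with hc
  have h_inner : ∀ i, ∑ j ∈ range (i + 1), qBinom q i j * q⁻¹ ^ (j * i) * c j =
      if i = 0 then 0 else w ^ i * qPoch q x i / qPoch q (w * x) i :=
    sum_range_qBinom_mul_sign_mul_qPoch_div_sub_one hq hden1 hwx
  have h_lhs : ∑ i ∈ Icc 1 n, w ^ i * y ^ (n - i) * qPoch q x i * qPoch q y i *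
        qPoch q z (n - i) / (qPoch q (w * x) i * qPoch q q i * qPoch q q (n - i)) =
      ∑ i ∈ range (n + 1), (∑ j ∈ range (i + 1), qBinom q i j * q⁻¹ ^ (j * i) * c j) *
        (y ^ (n - i) * qPoch q y i * qPoch q z (n - i) / (qPoch q q i * qPoch q q (n - i))) := by
    rw [← sum_Icc_one_eq_sum_range_succ _ (by rw [h_inner, if_pos rfl, zero_mul])]
    refine sum_congr rfl fun i hi ↦ ?_
    rw [h_inner, if_neg (Nat.one_le_iff_ne_zero.mp (mem_Icc.mp hi).1)]
    ring
  have h_rhs : ∑ i ∈ Icc 1 n, qBinom q n i * (-1) ^ (i - 1) *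
        q ^ (((i * (i + 1) / 2 : ℕ) : ℤ) - (i : ℤ) * n) * (1 - qPoch q w i / qPoch q (w * x) i) *
        (qPoch q y i / qPoch q (y * z) i) =
      ∑ j ∈ range (n + 1), qBinom q n j * q⁻¹ ^ (j * n) * c j *
        (qPoch q y j / qPoch q (y * z) j) := by
    rw [← sum_Icc_one_eq_sum_range_succ _ (by simp [hc, qPoch_zero])]
    refine sum_congr rfl fun i hi ↦ ?_
    obtain ⟨k, rfl⟩ := Nat.exists_eq_add_of_le' (mem_Icc.mp hi).1
    rw [zpow_natCast_sub_mul hq, hc, Nat.add_sub_cancel]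
    beta_reduce
    rw [pow_succ (-1 : ℝ) k]
    ring
  rw [h_lhs, h_rhs, mul_sum_qBinom_transform hq hden1 hyz]

/-- Proposition 3.3: a four-parameter extension of the Fu–Lascoux identity. -/
theorem prop33 (q w x y z : ℝ) (n : ℕ) (hn : 0 < n) (hq : q ≠ 0)
    (hden1 : ∀ j : ℕ, 1 ≤ j → 1 - q ^ j ≠ 0)
    (hden2 : ∀ j : ℕ, 0 ≤ j → 1 - w * x * q ^ j ≠ 0)
    (hden3 : ∀ j : ℕ, 0 ≤ j → 1 - y * z * q ^ j ≠ 0) :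
    qPoch q q n / qPoch q (y * z) n *
        ∑ i ∈ Finset.Icc 1 n,
          w ^ i * y ^ (n - i) * qPoch q x i * qPoch q y i * qPoch q z (n - i) /
            (qPoch q (w * x) i * qPoch q q i * qPoch q q (n - i)) =
      ∑ i ∈ Finset.Icc 1 n,
        qBinom q n i * (-1) ^ (i - 1) * q ^ (((i * (i + 1) / 2 : ℕ) : ℤ) - (i : ℤ) * n) *
          (1 - qPoch q w i / qPoch q (w * x) i) * (qPoch q y i / qPoch q (y * z) i) :=
  prop33_general q w x y z n hq hden1 hden2 hden3
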